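/- arXiv:1511.04771 — 5 statements merged into one kernel-verified Lean document; each statement's English description precedes it below -/
import Mathlib

section
/- Let A ∈ ℂ^{p×p}, x_i an eigenvalue of A, and let {v_{0,j}, v_{1,j}, ..., v_{κ-1,j}} be a Jordan chain for A at x_i, i.e., (x_i I_p - A)v_{0,j} = 0 and (x_i I_p - A)v_{r,j} = -v_{r-1,j} for 1 ≤ r ≤ κ-1. Define the vector polynomial v_j(x) = Σ_{r=0}^{κ-1} v_{r,j}(x - x_i)^r. Then for any matrix polynomial P(x) ∈ ℂ^{p×p}[x] and for all r with 0 ≤ r ≤ κ-1, (1/r!) d^r/dx^r [P(x)v_j(x)] evaluated at x = x_i equals P(A) v_{r,j}, where P(A) is the right evaluation of P at A. -/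
/-!
Write `N = A - x_i` and expand `P(x) = ∑ Q_i (x - x_i)ⁱ` with Taylor coefficients
`Q_i = P⁽ⁱ⁾(x_i)/i!`. Then `P(A) = ∑ Q_i Nⁱ` (entrywise, as scalar polynomials evaluated at `A`),
and on the Jordan chain `Nⁱ v_r = v_{r-i}` (zero for `i > r`), so `P(A) v_r = ∑_{i ≤ r} Q_i v_{r-i}`.
This is also the `r`-th Taylor coefficient at `x_i` of `P(x) v_j(x) = (∑ Q_i (x - x_i)ⁱ)(∑ v_s (x - x_i)ˢ)`.
-/

open Polynomial Matrix

open Finset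
open scoped Nat

theorem Polynomial.inv_factorial_mul_eval_iterate_derivative {K : Type*} [Field K] [CharZero K]
    (f : K[X]) (x : K) (r : ℕ) :
    (r ! : K)⁻¹ * eval x (derivative^[r] f) = (taylor x f).coeff r := by
  rw [taylor_coeff, ← factorial_smul_hasseDeriv, LinearMap.smul_apply, eval_smul, nsmul_eq_mul,
    inv_mul_cancel_left₀ (by exact_mod_cast r.factorial_ne_zero)]

theorem Polynomial.coeff_taylor_mul_sum_C_mul_X_sub_C_pow {R : Type*} [CommRing R]
    (q : R[X]) (x : R) (c : ℕ → R) {κ r : ℕ} (hr : r < κ) :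
    (taylor x (q * ∑ s ∈ range κ, C (c s) * (X - C x) ^ s)).coeff r
      = ∑ i ∈ range (r + 1), (taylor x q).coeff i * c (r - i) := by
  have htaylor : taylor x (∑ s ∈ range κ, C (c s) * (X - C x) ^ s)
      = ∑ s ∈ range κ, C (c s) * X ^ s := by
    simp [map_sum, taylor_X, taylor_C]
  rw [taylor_mul, htaylor, coeff_mul, Nat.sum_antidiagonal_eq_sum_range_succ_mk]
  refine sum_congr rfl fun i hi => ?_
  have : r - i < κ := by omega
  simp [finsetSum_coeff, this.not_ge]

namespace Matrix

variable {ι R : Type*} [Fintype ι] [DecidableEq ι] [CommRing R]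

def IsJordanChain (A : Matrix ι ι R) (x : R) (v : ℕ → ι → R) (κ : ℕ) : Prop :=
  (A - x • 1) *ᵥ v 0 = 0 ∧ ∀ s, s + 1 < κ → (A - x • 1) *ᵥ v (s + 1) = v s

namespace IsJordanChain

variable {A : Matrix ι ι R} {x : R} {v : ℕ → ι → R} {κ : ℕ}

theorem pow_sub_smul_one_mulVec (hv : IsJordanChain A x v κ) (m : ℕ) {s : ℕ} (hs : s < κ) :
    (A - x • 1) ^ m *ᵥ v s = if m ≤ s then v (s - m) else 0 := by
  induction m generalizing s with
  | zero => simp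
  | succ m ih =>
    rw [pow_succ, ← mulVec_mulVec]
    rcases s with _ | s
    · simp [hv.1]
    · rw [hv.2 s hs, ih (by omega)]
      simp [Nat.add_sub_add_right]

theorem aeval_sub_smul_one_mulVec (hv : IsJordanChain A x v κ) (g : R[X]) {r : ℕ} (hr : r < κ) :
    aeval (A - x • 1) g *ᵥ v r = ∑ i ∈ range (r + 1), g.coeff i • v (r - i) := by
  induction g using Polynomial.induction_on' with
  | add f g hf hg => simp [add_mulVec, hf, hg, add_smul, sum_add_distrib]
  | monomial n a =>
    rw [aeval_monomial, Algebra.algebraMap_eq_smul_one, smul_one_mul, smul_mulVec,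
      hv.pow_sub_smul_one_mulVec n hr]
    simp [coeff_monomial, ite_smul]

theorem aeval_mulVec (hv : IsJordanChain A x v κ) (q : R[X]) {r : ℕ} (hr : r < κ) :
    aeval A q *ᵥ v r = ∑ i ∈ range (r + 1), (taylor x q).coeff i • v (r - i) := by
  have : aeval A q = aeval (A - x • 1) (taylor x q) := by
    rw [taylor_apply, aeval_comp]
    simp [Algebra.algebraMap_eq_smul_one]
  rw [this, hv.aeval_sub_smul_one_mulVec _ hr]

end IsJordanChain

theorem sum_map_coeff_mul_pow_mulVec_apply (P : Matrix ι ι R[X]) (A : Matrix ι ι R) {n : ℕ}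
    (hdeg : ∀ a b, (P a b).natDegree ≤ n) (w : ι → R) (a : ι) :
    ((∑ k ∈ range (n + 1), P.map (fun q => q.coeff k) * A ^ k) *ᵥ w) a
      = ∑ b, (aeval A (P a b) *ᵥ w) b := by
  simp_rw [aeval_eq_sum_range' (Nat.lt_add_one_of_le (hdeg _ _)), sum_mulVec]
  simp only [Finset.sum_apply, ← mulVec_mulVec, smul_mulVec, Pi.smul_apply, smul_eq_mul]
  rw [sum_comm]
  refine sum_congr rfl fun k _ => ?_
  simp only [mulVec, dotProduct, map_apply]

end Matrix

theorem derivative_P_root_polynomial_eq_rightEval_mulVec_general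
    (p : ℕ) (A : Matrix (Fin p) (Fin p) ℂ) (xi : ℂ) (κ : ℕ)
    (v : ℕ → Fin p → ℂ)
    (h0 : (xi • (1 : Matrix (Fin p) (Fin p) ℂ) - A).mulVec (v 0) = 0)
    (hchain : ∀ r, 0 < r → r < κ →
      (xi • (1 : Matrix (Fin p) (Fin p) ℂ) - A).mulVec (v r) = -(v (r - 1)))
    (n : ℕ) (P : Matrix (Fin p) (Fin p) (Polynomial ℂ))
    (hdeg : ∀ a b, (P a b).natDegree ≤ n) :
    ∀ r < κ, (fun a => ((r.factorial : ℂ))⁻¹ *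
        Polynomial.eval xi (Polynomial.derivative^[r]
          ((P.mulVec (fun b => ∑ s ∈ Finset.range κ,
            Polynomial.C (v s b) * (Polynomial.X - Polynomial.C xi) ^ s)) a)))
      = (∑ k ∈ Finset.range (n + 1),
          (P.map (fun w => w.coeff k)) * A ^ k).mulVec (v r) := by
  have hv : IsJordanChain A xi v κ := by
    refine ⟨?_, fun s hs => ?_⟩ <;> rw [← neg_sub, neg_mulVec]
    · rw [h0, neg_zero]
    · rw [hchain (s + 1) s.succ_pos hs, neg_neg, Nat.add_sub_cancel]
  intro r hr
  funext a
  rw [sum_map_coeff_mul_pow_mulVec_apply P A hdeg, mulVec, dotProduct, iterate_derivative_sum,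
    eval_finsetSum, mul_sum]
  refine sum_congr rfl fun b _ => ?_
  rw [inv_factorial_mul_eval_iterate_derivative, coeff_taylor_mul_sum_C_mul_X_sub_C_pow _ _ _ hr,
    hv.aeval_mulVec _ hr]
  simp [Finset.sum_apply]

/-- If `{v_0, …, v_{κ-1}}` is a Jordan chain for `A ∈ ℂ^{p×p}` at the eigenvalue `x_i` and
`v_j(x) = ∑_{r<κ} v_r (x - x_i)^r` is the associated root polynomial, then for every matrix
polynomial `P` and every `0 ≤ r ≤ κ - 1`,
`(1/r!) dʳ/dxʳ [P(x) v_j(x)] |_{x = x_i} = P(A) v_r`, where `P(A)` is the right evaluation. -/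
theorem derivative_P_root_polynomial_eq_rightEval_mulVec
    (p : ℕ) (A : Matrix (Fin p) (Fin p) ℂ) (xi : ℂ) (κ : ℕ) (hκ : 0 < κ)
    (v : ℕ → Fin p → ℂ) (hv0 : v 0 ≠ 0)
    (h0 : (xi • (1 : Matrix (Fin p) (Fin p) ℂ) - A).mulVec (v 0) = 0)
    (hchain : ∀ r, 0 < r → r < κ →
      (xi • (1 : Matrix (Fin p) (Fin p) ℂ) - A).mulVec (v r) = -(v (r - 1)))
    (n : ℕ) (P : Matrix (Fin p) (Fin p) (Polynomial ℂ))
    (hdeg : ∀ a b, (P a b).natDegree ≤ n) :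
    ∀ r < κ, (fun a => ((r.factorial : ℂ))⁻¹ *
        Polynomial.eval xi (Polynomial.derivative^[r]
          ((P.mulVec (fun b => ∑ s ∈ Finset.range κ,
            Polynomial.C (v s b) * (Polynomial.X - Polynomial.C xi) ^ s)) a)))
      = (∑ k ∈ Finset.range (n + 1),
          (P.map (fun w => w.coeff k)) * A ^ k).mulVec (v r) :=
  derivative_P_root_polynomial_eq_rightEval_mulVec_general p A xi κ v h0 hchain n P hdeg
end

section
/- Assume both moment matrices M and M̂ = W(Λ)M admit block Gaussian factorizations M = S_1^{-1} H S_2^{-⊤} and M̂ = Ŝ_1^{-1} Ĥ Ŝ_2^{-⊤}, with S_i, Ŝ_i block lower unitriangular and H, Ĥ block diagonal. Define the resolvents ω^{[1]} := Ŝ_1 W(Λ) S_1^{-1} and ω^{[2]} := (S_2 Ŝ_2^{-1})^⊤. Then Ĥ ω^{[2]} = ω^{[1]} H. -/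
open Matrix

/-!
Both sides are the `(i, j)` block of `Ŝ₁ W(Λ) M S₂ᵀ`. Multiplying `Ŝ₁ M̂ Ŝ₂ᵀ = Ĥ` on the right
by `ω⁽²⁾` and using `Ŝ₂ᵀ ω⁽²⁾ = S₂ᵀ` gives `Ĥ ω⁽²⁾ = Ŝ₁ M̂ S₂ᵀ`; multiplying `S₁ M S₂ᵀ = H` on the
left by `ω⁽¹⁾` and using `ω⁽¹⁾ S₁ = Ŝ₁ W(Λ)` gives `ω⁽¹⁾ H = Ŝ₁ W(Λ) M S₂ᵀ`. Triangularity of the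
factors and bandedness of `ω⁽¹⁾` and `W(Λ)` make every product of semi-infinite matrices involved
a finite sum, so both reassociations are legitimate.
-/

open Finset

section Reassociation

variable {R : Type*} [NonUnitalSemiring R]

theorem mul_eq_sum_of_row_mul_upper_eq_single (x : ℕ → R) (U : ℕ → ℕ → R) (v w : ℕ → R)
    (i n : ℕ) (d : R) (hU : ∀ l k, k < l → U l k = 0) (hv : ∀ k, n ≤ k → v k = 0)
    (hx : ∀ k, ∑ l ∈ range (k + 1), x l * U l k = if i = k then d else 0)
    (hUv : ∀ l, ∑ k ∈ range n, U l k * v k = w l) :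
    d * v i = ∑ l ∈ range n, x l * w l := by
  calc d * v i = ∑ k ∈ range n, (if i = k then d else 0) * v k := by
        simp only [ite_zero_mul, sum_ite_eq, mem_range]
        split_ifs with hi
        · rfl
        · rw [hv i (not_lt.mp hi), mul_zero]
    _ = ∑ k ∈ range n, (∑ l ∈ range n, x l * U l k) * v k := by
        refine sum_congr rfl fun k hk => ?_
        rw [← hx k, eventually_constant_sum (fun l hl => by rw [hU l k hl, mul_zero])
          (mem_range.mp hk)]
    _ = ∑ l ∈ range n, x l * w l := by
        simp only [← hUv, sum_mul, mul_sum, mul_assoc]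
        exact sum_comm

theorem mul_eq_sum_of_lower_mul_col_eq_single (w : ℕ → R) (L : ℕ → ℕ → R) (t y : ℕ → R)
    (j n : ℕ) (D : ℕ → R) (hL : ∀ k m, k < m → L k m = 0) (hw : ∀ k, n ≤ k → w k = 0)
    (hy : ∀ k, ∑ m ∈ range (k + 1), L k m * y m = if k = j then D k else 0)
    (hwL : ∀ m, ∑ k ∈ range n, w k * L k m = t m) :
    w j * D j = ∑ m ∈ range n, t m * y m := by
  calc w j * D j = ∑ k ∈ range n, w k * (if k = j then D k else 0) := by
        simp only [mul_ite_zero, sum_ite_eq', mem_range]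
        split_ifs with hj
        · rfl
        · rw [hw j (not_lt.mp hj), zero_mul]
    _ = ∑ k ∈ range n, w k * ∑ m ∈ range n, L k m * y m := by
        refine sum_congr rfl fun k hk => ?_
        rw [← hy k, eventually_constant_sum (fun m hm => by rw [hL k m hm, zero_mul])
          (mem_range.mp hk)]
    _ = ∑ m ∈ range n, t m * y m := by
        simp only [← hwL, sum_mul, mul_sum, mul_assoc]
        exact sum_comm

-- The `(s, m)` block of `W(Λ)` is `A (m - s)` on the band `s ≤ m ≤ s + N` and `0` elsewhere.
theorem sum_blockShiftPoly_mul (A y : ℕ → R) (N s n : ℕ) (hn : s + N < n) :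
    ∑ m ∈ range n, (if s ≤ m ∧ m ≤ s + N then A (m - s) else 0) * y m
      = ∑ r ∈ range (N + 1), A r * y (s + r) := by
  have hbelow : ∀ m ∈ range s, (if s ≤ m ∧ m ≤ s + N then A (m - s) else 0) * y m = 0 :=
    fun m hm => by rw [if_neg (by simp only [mem_range] at hm; omega), zero_mul]
  rw [eventually_constant_sum (N := s + (N + 1))
      (fun m hm => by rw [if_neg (by omega), zero_mul]) (by omega),
    sum_range_add, sum_eq_zero hbelow, zero_add]
  refine sum_congr rfl fun r hr => ?_
  rw [if_pos ⟨by omega, by simp only [mem_range] at hr; omega⟩, Nat.add_sub_cancel_left]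

theorem sum_row_mul_blockShiftPoly_mul (a A y : ℕ → R) (N i : ℕ) :
    ∑ m ∈ range (i + N + 1),
        (∑ s ∈ range (i + 1), a s * (if s ≤ m ∧ m ≤ s + N then A (m - s) else 0)) * y m
      = ∑ s ∈ range (i + 1), a s * ∑ r ∈ range (N + 1), A r * y (s + r) := by
  simp only [sum_mul, mul_assoc]
  rw [sum_comm]
  refine sum_congr rfl fun s hs => ?_
  rw [← mul_sum, sum_blockShiftPoly_mul A y N s _ (by simp only [mem_range] at hs; omega)]

end Reassociation

theorem resolvent_relation_general
    (p N : ℕ)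
    (A : ℕ → Matrix (Fin p) (Fin p) ℝ)  -- coefficients of `W`, `W(x) = ∑_{r ≤ N} A_r x^r`
    (M S1 S2 Sh1 Sh2 : ℕ → ℕ → Matrix (Fin p) (Fin p) ℝ)
    (Hd Hh : ℕ → Matrix (Fin p) (Fin p) ℝ)
    (hS1u : ∀ i j, i < j → S1 i j = 0)
    (hSh2u : ∀ i j, i < j → Sh2 i j = 0)
    -- Gaussian factorization of `M`: `S₁ M S₂ᵀ = H`
    (hfac : ∀ i j, ∑ k ∈ Finset.range (i + 1), ∑ l ∈ Finset.range (j + 1),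
        S1 i k * M k l * (S2 j l)ᵀ = if i = j then Hd i else 0)
    -- Gaussian factorization of `M̂ = W(Λ) M`: `Ŝ₁ W(Λ) M Ŝ₂ᵀ = Ĥ`
    (hfach : ∀ i j, ∑ k ∈ Finset.range (i + 1), ∑ l ∈ Finset.range (j + 1),
        Sh1 i k * (∑ r ∈ Finset.range (N + 1), A r * M (k + r) l) * (Sh2 j l)ᵀ
          = if i = j then Hh i else 0)
    (ω1 ω2 : ℕ → ℕ → Matrix (Fin p) (Fin p) ℝ)
    -- `ω⁽¹⁾` is banded: vanishes above the `N`-th block superdiagonal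
    (hω1band : ∀ i j, i + N < j → ω1 i j = 0)
    -- `ω⁽¹⁾ S₁ = Ŝ₁ W(Λ)`
    (hω1def : ∀ i j, ∑ k ∈ Finset.range (i + N + 1), ω1 i k * S1 k j
        = ∑ s ∈ Finset.range (i + 1),
            Sh1 i s * (if s ≤ j ∧ j ≤ s + N then A (j - s) else 0))
    -- `ω⁽²⁾` is block upper triangular
    (hω2upper : ∀ i j, j < i → ω2 i j = 0)
    -- `(ω⁽²⁾)ᵀ Ŝ₂ = S₂`
    (hω2def : ∀ i j, ∑ k ∈ Finset.range (i + 1), (ω2 k i)ᵀ * Sh2 k j = S2 i j) :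
    ∀ i j, Hh i * ω2 i j = ω1 i j * Hd j := by
  intro i j
  have hleft : Hh i * ω2 i j = ∑ l ∈ range (j + 1),
      (∑ k ∈ range (i + 1), Sh1 i k * ∑ r ∈ range (N + 1), A r * M (k + r) l) * (S2 j l)ᵀ :=
    mul_eq_sum_of_row_mul_upper_eq_single _ (fun l k => (Sh2 k l)ᵀ) (fun k => ω2 k j) _ i
      (j + 1) _ (fun l k h => by rw [hSh2u k l h, transpose_zero])
      (fun k => hω2upper k j)
      (fun k => by rw [← hfach i k]; simp only [sum_mul]; exact sum_comm)
      (fun l => by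
        rw [← hω2def j l, transpose_sum]; simp only [transpose_mul, transpose_transpose])
  have hright : ω1 i j * Hd j = ∑ m ∈ range (i + N + 1),
      (∑ s ∈ range (i + 1), Sh1 i s * (if s ≤ m ∧ m ≤ s + N then A (m - s) else 0))
        * ∑ l ∈ range (j + 1), M m l * (S2 j l)ᵀ :=
    mul_eq_sum_of_lower_mul_col_eq_single (ω1 i) S1 _ _ j (i + N + 1) Hd hS1u (hω1band i)
      (fun k => by rw [← hfac k j]; simp only [mul_sum, mul_assoc])
      (hω1def i)
  rw [hleft, hright, sum_row_mul_blockShiftPoly_mul]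
  simp only [sum_mul, mul_sum, mul_assoc]
  rw [sum_comm]
  refine sum_congr rfl fun k _ => ?_
  rw [sum_comm]

/-- For semi-infinite block matrices with Gaussian factorizations `M = S₁⁻¹ H S₂⁻ᵀ` and
`M̂ = W(Λ)M = Ŝ₁⁻¹ Ĥ Ŝ₂⁻ᵀ` (encoded as `S₁ M S₂ᵀ = H`, `Ŝ₁ M̂ Ŝ₂ᵀ = Ĥ` with block lower
unitriangular `S`'s and block diagonal `H`'s), the resolvents `ω⁽¹⁾ = Ŝ₁ W(Λ) S₁⁻¹`
(characterized by `ω⁽¹⁾ S₁ = Ŝ₁ W(Λ)` together with its bandedness) and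
`ω⁽²⁾ = (S₂ Ŝ₂⁻¹)ᵀ` (characterized by `(ω⁽²⁾)ᵀ Ŝ₂ = S₂` together with upper
unitriangularity) satisfy `Ĥ ω⁽²⁾ = ω⁽¹⁾ H`. -/
theorem resolvent_relation
    (p N : ℕ)
    (A : ℕ → Matrix (Fin p) (Fin p) ℝ)  -- coefficients of `W`, `W(x) = ∑_{r ≤ N} A_r x^r`
    (M S1 S2 Sh1 Sh2 : ℕ → ℕ → Matrix (Fin p) (Fin p) ℝ)
    (Hd Hh : ℕ → Matrix (Fin p) (Fin p) ℝ)
    (hS1d : ∀ i, S1 i i = 1) (hS1u : ∀ i j, i < j → S1 i j = 0)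
    (hS2d : ∀ i, S2 i i = 1) (hS2u : ∀ i j, i < j → S2 i j = 0)
    (hSh1d : ∀ i, Sh1 i i = 1) (hSh1u : ∀ i j, i < j → Sh1 i j = 0)
    (hSh2d : ∀ i, Sh2 i i = 1) (hSh2u : ∀ i j, i < j → Sh2 i j = 0)
    -- Gaussian factorization of `M`: `S₁ M S₂ᵀ = H`
    (hfac : ∀ i j, ∑ k ∈ Finset.range (i + 1), ∑ l ∈ Finset.range (j + 1),
        S1 i k * M k l * (S2 j l)ᵀ = if i = j then Hd i else 0)
    -- Gaussian factorization of `M̂ = W(Λ) M`: `Ŝ₁ W(Λ) M Ŝ₂ᵀ = Ĥ`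
    (hfach : ∀ i j, ∑ k ∈ Finset.range (i + 1), ∑ l ∈ Finset.range (j + 1),
        Sh1 i k * (∑ r ∈ Finset.range (N + 1), A r * M (k + r) l) * (Sh2 j l)ᵀ
          = if i = j then Hh i else 0)
    (ω1 ω2 : ℕ → ℕ → Matrix (Fin p) (Fin p) ℝ)
    -- `ω⁽¹⁾` is banded: vanishes above the `N`-th block superdiagonal
    (hω1band : ∀ i j, i + N < j → ω1 i j = 0)
    -- `ω⁽¹⁾ S₁ = Ŝ₁ W(Λ)`
    (hω1def : ∀ i j, ∑ k ∈ Finset.range (i + N + 1), ω1 i k * S1 k j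
        = ∑ s ∈ Finset.range (i + 1),
            Sh1 i s * (if s ≤ j ∧ j ≤ s + N then A (j - s) else 0))
    -- `ω⁽²⁾` is block upper triangular
    (hω2upper : ∀ i j, j < i → ω2 i j = 0)
    -- `(ω⁽²⁾)ᵀ Ŝ₂ = S₂`
    (hω2def : ∀ i j, ∑ k ∈ Finset.range (i + 1), (ω2 k i)ᵀ * Sh2 k j = S2 i j) :
    ∀ i j, Hh i * ω2 i j = ω1 i j * Hd j :=
  resolvent_relation_general p N A M S1 S2 Sh1 Sh2 Hd Hh hS1u hSh2u hfac hfach ω1 ω2 hω1band hω1def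
    hω2upper hω2def
end

section
/- Under the assumptions of the previous statement with W monic of degree N, the resolvent ω^{[1]} = Ŝ_1 W(Λ) S_1^{-1} is a banded block upper triangular matrix: its (k,l) block vanishes for l < k and for l > k + N, the (k, k+N) block equals I_p, and the (k,k) block equals Ĥ_k H_k^{-1}. -/
/-!
Put `C = S₁ M` and `B = Ŝ₁ W(Λ) M`. The factorizations say that `C S₂ᵀ = H` and `B Ŝ₂ᵀ = Ĥ`
are block diagonal; as `S₂, Ŝ₂` are unitriangular, `C` and `B` are block upper triangular with
diagonals `H` and `Ĥ`. Since `S₁⁻¹` is lower triangular and `W` is monic of degree `N`,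
`ω⁽¹⁾ = Ŝ₁ W(Λ) S₁⁻¹` vanishes beyond the `N`-th superdiagonal, where its block is `I_p`.
Finally `ω⁽¹⁾ C = B`, because the right inverse `S₁⁻¹` of the lower triangular `S₁` is also a left
inverse. Solving `ω⁽¹⁾ C = B` column by column, with `C` upper triangular and `H` invertible,
shows that `ω⁽¹⁾` vanishes below the diagonal and that `ω⁽¹⁾ᵢᵢ Hᵢ = Ĥᵢ`.
-/

open Matrix

/-- The resolvent `ω⁽¹⁾ = Ŝ₁ W(Λ) S₁⁻¹`, written explicitly with `T₁ = S₁⁻¹`. -/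
def omega1 (p N : ℕ) (A : ℕ → Matrix (Fin p) (Fin p) ℝ)
    (Sh1 T1 : ℕ → ℕ → Matrix (Fin p) (Fin p) ℝ) : ℕ → ℕ → Matrix (Fin p) (Fin p) ℝ :=
  fun i j => ∑ s ∈ Finset.range (i + 1), ∑ r ∈ Finset.range (N + 1),
    Sh1 i s * A r * T1 (s + r) j

open Finset

section Triangular

variable {α : Type*} [Semiring α]

lemma sum_range_mul_of_isLowerTriangular {S : ℕ → ℕ → α} (hS : IsLowerTriangular S)
    (f : ℕ → α) {i n : ℕ} (hin : i < n) :
    ∑ k ∈ range n, S i k * f k = ∑ k ∈ range (i + 1), S i k * f k := by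
  refine (sum_subset (range_subset_range.mpr hin) fun k _ hk => ?_).symm
  rw [hS (OrderDual.toDual_lt_toDual.mpr (by simpa using hk)), zero_mul]

def truncate (n : ℕ) (F : ℕ → ℕ → α) : Matrix (Fin n) (Fin n) α := of fun a b => F a b

lemma truncate_mul_truncate_apply {F : ℕ → ℕ → α} (hF : IsLowerTriangular F) (G : ℕ → ℕ → α)
    {n : ℕ} (a b : Fin n) :
    (truncate n F * truncate n G) a b = ∑ k ∈ range (a + 1), F a k * G k b := by
  simp only [mul_apply, truncate, of_apply]
  rw [Fin.sum_univ_eq_sum_range (fun k => F a k * G k b),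
    sum_range_mul_of_isLowerTriangular hF _ a.isLt]

/-- The leading `n × n` truncations of `S` and `T` are mutually inverse, and finite matrices
over a stably finite ring are Dedekind finite. -/
lemma sum_mul_eq_ite_of_isLowerTriangular_of_rightInverse [IsStablyFiniteRing α]
    {S T : ℕ → ℕ → α} (hS : IsLowerTriangular S) (hT : IsLowerTriangular T)
    (hST : ∀ i j, ∑ k ∈ range (i + 1), S i k * T k j = if i = j then 1 else 0)
    (i j : ℕ) : ∑ k ∈ range (i + 1), T i k * S k j = if i = j then 1 else 0 := by
  have hST' : truncate (i + j + 1) S * truncate (i + j + 1) T = 1 := by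
    ext a b
    rw [truncate_mul_truncate_apply hS, hST, one_apply]
    simp only [Fin.val_inj]
  have hTS : truncate (i + j + 1) T * truncate (i + j + 1) S = 1 := mul_eq_one_comm.mp hST'
  replace hTS := congr_fun₂ hTS ⟨i, by omega⟩ ⟨j, by omega⟩
  rw [truncate_mul_truncate_apply hT, one_apply] at hTS
  simpa only [Fin.mk.injEq] using hTS

lemma sum_mul_sum_mul_eq_of_leftInverse {S T : ℕ → ℕ → α}
    (hS : IsLowerTriangular S) (hT : IsLowerTriangular T)
    (hTS : ∀ i j, ∑ k ∈ range (i + 1), T i k * S k j = if i = j then 1 else 0)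
    (X : ℕ → ℕ → α) {m n : ℕ} (hmn : m ≤ n) (j : ℕ) :
    ∑ t ∈ range (n + 1), T m t * ∑ k ∈ range (t + 1), S t k * X k j = X m j := by
  calc ∑ t ∈ range (n + 1), T m t * ∑ k ∈ range (t + 1), S t k * X k j
      = ∑ t ∈ range (n + 1), ∑ k ∈ range (n + 1), T m t * S t k * X k j := by
        refine sum_congr rfl fun t ht => ?_
        rw [← sum_range_mul_of_isLowerTriangular hS (X · j) (mem_range.mp ht), mul_sum]
        simp only [mul_assoc]
    _ = ∑ k ∈ range (n + 1), (∑ t ∈ range (n + 1), T m t * S t k) * X k j := by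
        rw [sum_comm]
        simp only [sum_mul]
    _ = ∑ k ∈ range (n + 1), (if m = k then 1 else 0) * X k j := by
        refine sum_congr rfl fun k _ => ?_
        rw [sum_range_mul_of_isLowerTriangular hT (S · k) (Nat.lt_succ_of_le hmn), hTS]
    _ = X m j := by
        simp [ite_mul, Nat.lt_succ_of_le hmn]

lemma isUpperTriangular_and_diag_of_factorization {L X U : ℕ → ℕ → α} {D : ℕ → α}
    (hU : ∀ i, U i i = 1)
    (hfac : ∀ i j, ∑ k ∈ range (i + 1), ∑ l ∈ range (j + 1), L i k * X k l * U j l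
      = if i = j then D i else 0) :
    IsUpperTriangular (fun i j => ∑ k ∈ range (i + 1), L i k * X k j) ∧
      ∀ i, ∑ k ∈ range (i + 1), L i k * X k i = D i := by
  set LX : ℕ → ℕ → α := fun i j => ∑ k ∈ range (i + 1), L i k * X k j
  have hLXU : ∀ i j, ∑ l ∈ range (j + 1), LX i l * U j l = if i = j then D i else 0 := by
    intro i j
    rw [← hfac, sum_comm]
    simp only [LX, sum_mul]
  have hlower : ∀ j i, j ≤ i → LX i j = if i = j then D i else 0 := by
    intro j
    induction j using Nat.strong_induction_on with
    | _ j ih =>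
      intro i hji
      have hrow := hLXU i j
      rw [sum_range_succ, sum_eq_zero, zero_add, hU, mul_one] at hrow
      · exact hrow
      · intro l hl
        rw [ih l (mem_range.mp hl) i (by grind), if_neg (by grind), zero_mul]
  refine ⟨fun i j hji => ?_, fun i => ?_⟩
  · exact (hlower j i hji.le).trans (if_neg hji.ne')
  · exact (hlower i i le_rfl).trans (if_pos rfl)

lemma mul_diag_eq_of_sum_mul_eq {X C B : ℕ → ℕ → α} {N : ℕ}
    (hC : IsUpperTriangular C) (hCu : ∀ i, IsUnit (C i i)) (hB : IsUpperTriangular B)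
    (hXC : ∀ i j, ∑ t ∈ range (i + N + 1), X i t * C t j = B i j) :
    ∀ j i, j ≤ i → X i j * C j j = B i j := by
  intro j
  induction j using Nat.strong_induction_on with
  | _ j ih =>
    intro i hji
    rw [← hXC, sum_eq_single j]
    · intro t _ htj
      rcases htj.lt_or_gt with htj | htj
      · have hXt : X i t = 0 := by
          rw [← (hCu t).mul_left_eq_zero, ih t htj i (by omega), hB (show t < i by omega)]
        rw [hXt, zero_mul]
      · rw [hC htj, mul_zero]
    · intro hj
      exact absurd (mem_range.mpr (by omega)) hj

end Triangular

section Resolvent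

variable {p N : ℕ} {A : ℕ → Matrix (Fin p) (Fin p) ℝ} {Sh1 T1 : ℕ → ℕ → Matrix (Fin p) (Fin p) ℝ}

lemma omega1_eq_zero_of_add_lt (hT1u : IsLowerTriangular T1) {i j : ℕ} (hij : i + N < j) :
    omega1 p N A Sh1 T1 i j = 0 := by
  refine sum_eq_zero fun s hs => sum_eq_zero fun r hr => ?_
  rw [hT1u (OrderDual.toDual_lt_toDual.mpr (by grind)), mul_zero]

lemma omega1_self_add (hmonic : A N = 1) (hSh1d : ∀ i, Sh1 i i = 1) (hT1d : ∀ i, T1 i i = 1)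
    (hT1u : IsLowerTriangular T1) (i : ℕ) : omega1 p N A Sh1 T1 i (i + N) = 1 := by
  have hvanish : ∀ s r, s ≤ i → r ≤ N → s + r < i + N →
      Sh1 i s * A r * T1 (s + r) (i + N) = 0 := fun s r _ _ h => by
    rw [hT1u (OrderDual.toDual_lt_toDual.mpr h), mul_zero]
  rw [omega1, sum_range_succ, sum_eq_zero, zero_add, sum_range_succ, sum_eq_zero, zero_add,
    hSh1d, hmonic, hT1d, one_mul, one_mul]
  · exact fun r hr => hvanish i r le_rfl (by grind) (by grind)
  · exact fun s hs => sum_eq_zero fun r hr => hvanish s r (by grind) (by grind) (by grind)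

lemma sum_omega1_mul {S1 : ℕ → ℕ → Matrix (Fin p) (Fin p) ℝ} (hS1u : IsLowerTriangular S1)
    (hT1u : IsLowerTriangular T1)
    (hTS : ∀ i j, ∑ k ∈ range (i + 1), T1 i k * S1 k j = if i = j then 1 else 0)
    (M : ℕ → ℕ → Matrix (Fin p) (Fin p) ℝ) (i j : ℕ) :
    ∑ t ∈ range (i + N + 1), omega1 p N A Sh1 T1 i t * ∑ k ∈ range (t + 1), S1 t k * M k j
      = ∑ s ∈ range (i + 1), Sh1 i s * ∑ r ∈ range (N + 1), A r * M (s + r) j := by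
  simp only [omega1, sum_mul, mul_assoc]
  rw [sum_comm]
  refine sum_congr rfl fun s hs => ?_
  rw [sum_comm, mul_sum]
  refine sum_congr rfl fun r hr => ?_
  rw [← mul_sum, ← mul_sum, sum_mul_sum_mul_eq_of_leftInverse hS1u hT1u hTS M (by grind) j]

end Resolvent

theorem resolvent_band_structure_general
    (p N : ℕ)
    (A : ℕ → Matrix (Fin p) (Fin p) ℝ) (hmonic : A N = 1)
    (M S1 S2 Sh1 Sh2 T1 : ℕ → ℕ → Matrix (Fin p) (Fin p) ℝ)
    (Hd Hh : ℕ → Matrix (Fin p) (Fin p) ℝ)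
    (hS1u : ∀ i j, i < j → S1 i j = 0)
    (hS2d : ∀ i, S2 i i = 1)
    (hSh1d : ∀ i, Sh1 i i = 1)
    (hSh2d : ∀ i, Sh2 i i = 1)
    (hT1d : ∀ i, T1 i i = 1) (hT1u : ∀ i j, i < j → T1 i j = 0)
    -- `T₁` is the inverse of `S₁`
    (hT1 : ∀ i j, ∑ k ∈ Finset.range (i + 1), S1 i k * T1 k j = if i = j then 1 else 0)
    -- Gaussian factorization of `M`: `S₁ M S₂ᵀ = H`
    (hfac : ∀ i j, ∑ k ∈ Finset.range (i + 1), ∑ l ∈ Finset.range (j + 1),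
        S1 i k * M k l * (S2 j l)ᵀ = if i = j then Hd i else 0)
    -- Gaussian factorization of `M̂ = W(Λ) M`: `Ŝ₁ W(Λ) M Ŝ₂ᵀ = Ĥ`
    (hfach : ∀ i j, ∑ k ∈ Finset.range (i + 1), ∑ l ∈ Finset.range (j + 1),
        Sh1 i k * (∑ r ∈ Finset.range (N + 1), A r * M (k + r) l) * (Sh2 j l)ᵀ
          = if i = j then Hh i else 0)
    (hHu : ∀ i, IsUnit (Hd i)) :
    (∀ i j, j < i ∨ i + N < j → omega1 p N A Sh1 T1 i j = 0) ∧
    (∀ i, omega1 p N A Sh1 T1 i (i + N) = 1) ∧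
    (∀ i, omega1 p N A Sh1 T1 i i = Hh i * Ring.inverse (Hd i)) := by
  have hS1low : IsLowerTriangular S1 := fun _ _ h => hS1u _ _ h
  have hT1low : IsLowerTriangular T1 := fun _ _ h => hT1u _ _ h
  have hTS := sum_mul_eq_ite_of_isLowerTriangular_of_rightInverse hS1low hT1low hT1
  obtain ⟨hC, hCd⟩ := isUpperTriangular_and_diag_of_factorization (U := fun j l => (S2 j l)ᵀ)
    (fun i => by rw [hS2d, transpose_one]) hfac
  obtain ⟨hB, hBd⟩ := isUpperTriangular_and_diag_of_factorization (U := fun j l => (Sh2 j l)ᵀ)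
    (fun i => by rw [hSh2d, transpose_one]) hfach
  have hsolve := mul_diag_eq_of_sum_mul_eq hC (fun i => hCd i ▸ hHu i) hB
    (sum_omega1_mul hS1low hT1low hTS M)
  refine ⟨fun i j hij => ?_, omega1_self_add hmonic hSh1d hT1d hT1low, fun i => ?_⟩
  · rcases hij with hji | hij
    · have hcol := hsolve j i hji.le
      rw [hCd] at hcol
      exact (hHu j).mul_left_eq_zero.mp (hcol.trans (hB hji))
    · exact omega1_eq_zero_of_add_lt hT1low hij
  · rw [Ring.eq_mul_inverse_iff_mul_eq _ _ _ (hHu i), ← hCd i, hsolve i i le_rfl, hBd]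

/-- For a monic degree-`N` matrix polynomial perturbation, the resolvent
`ω⁽¹⁾ = Ŝ₁ W(Λ) S₁⁻¹` is a banded block upper triangular matrix: its `(i,j)` block vanishes
for `j < i` and for `j > i + N`, its `(i, i+N)` block is `I_p`, and its diagonal block is
`ω⁽¹⁾_{ii} = Ĥ_i H_i⁻¹`. -/
theorem resolvent_band_structure
    (p N : ℕ)
    (A : ℕ → Matrix (Fin p) (Fin p) ℝ) (hmonic : A N = 1)
    (M S1 S2 Sh1 Sh2 T1 : ℕ → ℕ → Matrix (Fin p) (Fin p) ℝ)
    (Hd Hh : ℕ → Matrix (Fin p) (Fin p) ℝ)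
    (hS1d : ∀ i, S1 i i = 1) (hS1u : ∀ i j, i < j → S1 i j = 0)
    (hS2d : ∀ i, S2 i i = 1) (hS2u : ∀ i j, i < j → S2 i j = 0)
    (hSh1d : ∀ i, Sh1 i i = 1) (hSh1u : ∀ i j, i < j → Sh1 i j = 0)
    (hSh2d : ∀ i, Sh2 i i = 1) (hSh2u : ∀ i j, i < j → Sh2 i j = 0)
    (hT1d : ∀ i, T1 i i = 1) (hT1u : ∀ i j, i < j → T1 i j = 0)
    -- `T₁` is the inverse of `S₁`
    (hT1 : ∀ i j, ∑ k ∈ Finset.range (i + 1), S1 i k * T1 k j = if i = j then 1 else 0)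
    -- Gaussian factorization of `M`: `S₁ M S₂ᵀ = H`
    (hfac : ∀ i j, ∑ k ∈ Finset.range (i + 1), ∑ l ∈ Finset.range (j + 1),
        S1 i k * M k l * (S2 j l)ᵀ = if i = j then Hd i else 0)
    -- Gaussian factorization of `M̂ = W(Λ) M`: `Ŝ₁ W(Λ) M Ŝ₂ᵀ = Ĥ`
    (hfach : ∀ i j, ∑ k ∈ Finset.range (i + 1), ∑ l ∈ Finset.range (j + 1),
        Sh1 i k * (∑ r ∈ Finset.range (N + 1), A r * M (k + r) l) * (Sh2 j l)ᵀ
          = if i = j then Hh i else 0)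
    (hHu : ∀ i, IsUnit (Hd i)) :
    (∀ i j, j < i ∨ i + N < j → omega1 p N A Sh1 T1 i j = 0) ∧
    (∀ i, omega1 p N A Sh1 T1 i (i + N) = 1) ∧
    (∀ i, omega1 p N A Sh1 T1 i i = Hh i * Ring.inverse (Hd i)) :=
  resolvent_band_structure_general p N A hmonic M S1 S2 Sh1 Sh2 T1 Hd Hh hS1u hS2d hSh1d hSh2d hT1d
    hT1u hT1 hfac hfach hHu
end

section
/- Degree-one Christoffel formula: let W(x) = I_p x − A, let {P_n^{[1]}} be the monic bi-orthogonal polynomials of the matrix measure dμ with ⟨P_n^{[1]},P_m^{[2]}⟩ = δ_{nm}H_n, and suppose det P_n^{[1]}(A) ≠ 0 for all n, where P(A) denotes right evaluation. Then the monic bi-orthogonal polynomials of the perturbed measure (I_p x − A)dμ(x) satisfy P̂_n^{[1]}(x)(I_p x − A) = P_{n+1}^{[1]}(x) − P_{n+1}^{[1]}(A)[P_n^{[1]}(A)]^{-1} P_n^{[1]}(x), and the perturbed norms are Ĥ_n = −P_{n+1}^{[1]}(A)[P_n^{[1]}(A)]^{-1} H_n. -/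
open Polynomial Matrix

/-- The sesquilinear pairing `⟨P,Q⟩ = ∑_{k,l} P_k m_{k+l} Q_lᵀ` associated with a block
Hankel moment sequence `m`. -/
noncomputable def matPair (p : ℕ) (m : ℕ → Matrix (Fin p) (Fin p) ℝ)
    (P Q : Polynomial (Matrix (Fin p) (Fin p) ℝ)) : Matrix (Fin p) (Fin p) ℝ :=
  ∑ k ∈ Finset.range (P.natDegree + 1), ∑ l ∈ Finset.range (Q.natDegree + 1),
    P.coeff k * m (k + l) * (Q.coeff l)ᵀ

/-- The right evaluation `P(A) = ∑_k P_k A^k` of a matrix polynomial at a matrix. -/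
noncomputable def rightEval (p : ℕ) (P : Polynomial (Matrix (Fin p) (Fin p) ℝ))
    (A : Matrix (Fin p) (Fin p) ℝ) : Matrix (Fin p) (Fin p) ℝ :=
  ∑ k ∈ Finset.range (P.natDegree + 1), P.coeff k * A ^ k

/-!
Right evaluation is `Polynomial.eval` over the noncommutative ring of matrices, and moving the
factor `W(x) = I_p x - A` from the polynomial into the moments gives `⟨P W, Q⟩ = ⟨P, Q⟩_W`.
Hence `R = P̂ₙ⁽¹⁾ W` and `S = P₍ₙ₊₁₎⁽¹⁾ - P₍ₙ₊₁₎⁽¹⁾(A) [Pₙ⁽¹⁾(A)]⁻¹ Pₙ⁽¹⁾` are both monic of degree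
`n + 1` and orthogonal to every `P_l⁽²⁾` with `l < n`, so `R - S = c Pₙ⁽¹⁾` for some matrix `c`.
Both `R` and `S` vanish under right evaluation at `A` (the first has the right factor `x - A`),
so `c Pₙ⁽¹⁾(A) = 0` and `c = 0`. Pairing `R = S` with `P̂ₙ⁽²⁾`, which differs from `Pₙ⁽²⁾` by a
polynomial of degree `< n`, gives `Ĥₙ = -P₍ₙ₊₁₎⁽¹⁾(A) [Pₙ⁽¹⁾(A)]⁻¹ Hₙ`.
-/

namespace Polynomial

open Finset

section Semiring

variable {R : Type*} [Semiring R]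

theorem IsMonicOfDegree.coeff_self {B : R[X]} {n : ℕ} (hB : B.IsMonicOfDegree n) :
    B.coeff n = 1 := by
  rw [← hB.natDegree_eq]
  exact hB.monic.coeff_natDegree

theorem IsMonicOfDegree.degree_lt {P : R[X]} {k n : ℕ} (hP : P.IsMonicOfDegree k) (hk : k < n) :
    P.degree < n :=
  (degree_le_of_natDegree_le hP.natDegree_eq.le).trans_lt (by exact_mod_cast hk)

/-- `P ↦ ∑ₖ Pₖ cₖ`, bundled as linear for `R` acting by left multiplication, so that
`C a * P ↦ a * _` is `map_smul`. -/
noncomputable def leftPairing (c : ℕ → R) : R[X] →ₗ[R] R :=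
  lsum fun k => LinearMap.toSpanSingleton R R (c k)

theorem leftPairing_apply (c : ℕ → R) (P : R[X]) :
    leftPairing c P = ∑ k ∈ range (P.natDegree + 1), P.coeff k * c k := by
  rw [leftPairing, lsum_apply, sum_over_range] <;> simp

theorem leftPairing_monomial (c : ℕ → R) (k : ℕ) (a : R) :
    leftPairing c (monomial k a) = a * c k := by
  rw [leftPairing, lsum_apply, sum_monomial_index] <;> simp

end Semiring

section Ring

variable {R : Type*} [Ring R]

theorem IsMonicOfDegree.degree_sub_lt {P Q : R[X]} {n : ℕ} (hP : P.IsMonicOfDegree n)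
    (hQ : Q.IsMonicOfDegree n) : (P - Q).degree < n :=
  (degree_lt_iff_coeff_zero _ _).2 fun k hk => by rw [coeff_sub, hP.coeff_eq hQ hk, sub_self]

theorem degree_sub_C_mul_lt {B Q : R[X]} {n : ℕ} (hB : B.IsMonicOfDegree n)
    (hQ : Q.degree < ↑(n + 1)) : (Q - C (Q.coeff n) * B).degree < n := by
  rw [degree_lt_iff_coeff_zero]
  intro k hk
  rw [coeff_sub, coeff_C_mul]
  rcases hk.eq_or_lt with rfl | hlt
  · rw [hB.coeff_self, mul_one, sub_self]
  · rw [coeff_eq_zero_of_degree_lt (hQ.trans_le (by exact_mod_cast hlt)),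
      coeff_eq_zero_of_natDegree_lt (hB.natDegree_eq.trans_lt hlt), mul_zero, sub_zero]

theorem exists_eq_sum_C_mul_of_degree_lt {B : ℕ → R[X]} (hB : ∀ k, (B k).IsMonicOfDegree k)
    {n : ℕ} {Q : R[X]} (hQ : Q.degree < n) :
    ∃ c : ℕ → R, Q = ∑ j ∈ range n, C (c j) * B j := by
  induction n generalizing Q with
  | zero => exact ⟨0, by simpa using hQ⟩
  | succ n ih =>
    obtain ⟨c, hc⟩ := ih (degree_sub_C_mul_lt (hB n) hQ)
    refine ⟨Function.update c n (Q.coeff n), ?_⟩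
    rw [sum_range_succ, Function.update_self, ← sub_eq_iff_eq_add, hc]
    exact sum_congr rfl fun j hj => by rw [Function.update_of_ne (mem_range.1 hj).ne]

end Ring

end Polynomial

section MatrixPairing

open Finset

variable {p : ℕ}

local notation "Mat" => Matrix (Fin p) (Fin p) ℝ

theorem rightEval_eq_eval (P : Mat[X]) (A : Mat) : rightEval p P A = P.eval A :=
  (eval_eq_sum_range A).symm

theorem eval_sub_C_mul_inv_mul_eq_zero {ι K : Type*} [Fintype ι] [DecidableEq ι] [CommRing K]
    (P Q : (Matrix ι ι K)[X]) (A : Matrix ι ι K) (hQ : IsUnit (Q.eval A)) :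
    (P - C (P.eval A * (Q.eval A)⁻¹) * Q).eval A = 0 := by
  rw [eval_sub, eval_C_mul, nonsing_inv_mul_cancel_right _ _ ((isUnit_iff_isUnit_det _).1 hQ),
    sub_self]

section Pairing

variable (m : ℕ → Matrix (Fin p) (Fin p) ℝ)

theorem matPair_eq_leftPairing (P Q : Mat[X]) :
    matPair p m P Q
      = leftPairing (fun k => ∑ l ∈ range (Q.natDegree + 1), m (k + l) * (Q.coeff l)ᵀ) P := by
  simp only [matPair, leftPairing_apply, mul_sum, Matrix.mul_assoc]

theorem matPair_eq_transpose (P Q : Mat[X]) :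
    matPair p m P Q = (matPair p (fun k => (m k)ᵀ) Q P)ᵀ := by
  simp only [matPair, transpose_sum, transpose_mul, transpose_transpose, Matrix.mul_assoc]
  rw [sum_comm]
  simp only [add_comm]

theorem matPair_sub_left (P P' Q : Mat[X]) :
    matPair p m (P - P') Q = matPair p m P Q - matPair p m P' Q := by
  simp only [matPair_eq_leftPairing, map_sub]

theorem matPair_sum_left {ι : Type*} (s : Finset ι) (P : ι → Mat[X]) (Q : Mat[X]) :
    matPair p m (∑ i ∈ s, P i) Q = ∑ i ∈ s, matPair p m (P i) Q := by
  simp only [matPair_eq_leftPairing, map_sum]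

theorem matPair_C_mul_left (B : Mat) (P Q : Mat[X]) :
    matPair p m (C B * P) Q = B * matPair p m P Q := by
  simp only [matPair_eq_leftPairing, C_mul', map_smul, smul_eq_mul]

theorem matPair_sub_right (P Q Q' : Mat[X]) :
    matPair p m P (Q - Q') = matPair p m P Q - matPair p m P Q' := by
  simp only [matPair_eq_transpose m P, matPair_sub_left, transpose_sub]

theorem matPair_sum_right {ι : Type*} (P : Mat[X]) (s : Finset ι) (Q : ι → Mat[X]) :
    matPair p m P (∑ i ∈ s, Q i) = ∑ i ∈ s, matPair p m P (Q i) := by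
  simp only [matPair_eq_transpose m P, matPair_sum_left, transpose_sum]

theorem matPair_C_mul_right (B : Mat) (P Q : Mat[X]) :
    matPair p m P (C B * Q) = matPair p m P Q * Bᵀ := by
  simp only [matPair_eq_transpose m P, matPair_C_mul_left, transpose_mul]

theorem matPair_mul_X_sub_C (A : Mat) (P Q : Mat[X]) :
    matPair p m (P * (X - C A)) Q = matPair p (fun r => m (r + 1) - A * m r) P Q := by
  simp only [matPair_eq_leftPairing]
  induction P using Polynomial.induction_on' with
  | add P P' hP hP' => rw [add_mul, map_add, map_add, hP, hP']
  | monomial k a =>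
    rw [mul_sub, monomial_mul_X, monomial_mul_C, map_sub, leftPairing_monomial,
      leftPairing_monomial, leftPairing_monomial]
    simp only [mul_sum, ← sum_sub_distrib, sub_mul, mul_sub, Matrix.mul_assoc, add_right_comm]

end Pairing

section BiOrthogonal

variable {m : ℕ → Matrix (Fin p) (Fin p) ℝ} {P1 P2 : ℕ → (Matrix (Fin p) (Fin p) ℝ)[X]}
  {H : ℕ → Matrix (Fin p) (Fin p) ℝ}

theorem matPair_eq_zero_of_degree_lt (hP2 : ∀ k, (P2 k).IsMonicOfDegree k)
    (hbi : ∀ k l, matPair p m (P1 k) (P2 l) = if k = l then H k else 0)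
    {k : ℕ} {Q : Mat[X]} (hQ : Q.degree < k) : matPair p m (P1 k) Q = 0 := by
  obtain ⟨c, rfl⟩ := exists_eq_sum_C_mul_of_degree_lt hP2 hQ
  rw [matPair_sum_right]
  refine sum_eq_zero fun j hj => ?_
  rw [matPair_C_mul_right, hbi, if_neg (mem_range.1 hj).ne', Matrix.zero_mul]

theorem eq_zero_of_forall_matPair_eq_zero (hP1 : ∀ k, (P1 k).IsMonicOfDegree k)
    (hbi : ∀ k l, matPair p m (P1 k) (P2 l) = if k = l then H k else 0)
    (hH : ∀ k, IsUnit (H k).det) {n : ℕ} {D : Mat[X]} (hD : D.degree < n)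
    (horth : ∀ l < n, matPair p m D (P2 l) = 0) : D = 0 := by
  obtain ⟨c, rfl⟩ := exists_eq_sum_C_mul_of_degree_lt hP1 hD
  have hc : ∀ l < n, c l = 0 := by
    intro l hl
    have hcl := horth l hl
    rw [matPair_sum_left, sum_eq_single_of_mem l (mem_range.2 hl) fun j _ hjl => by
      rw [matPair_C_mul_left, hbi, if_neg hjl, Matrix.mul_zero]] at hcl
    rw [matPair_C_mul_left, hbi, if_pos rfl] at hcl
    exact ((isUnit_iff_isUnit_det _).2 (hH l)).mul_left_eq_zero.1 hcl
  exact sum_eq_zero fun j hj => by rw [hc j (mem_range.1 hj), C_0, zero_mul]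

theorem eq_C_mul_of_forall_matPair_eq_zero (hP1 : ∀ k, (P1 k).IsMonicOfDegree k)
    (hbi : ∀ k l, matPair p m (P1 k) (P2 l) = if k = l then H k else 0)
    (hH : ∀ k, IsUnit (H k).det) {n : ℕ} {D : Mat[X]} (hD : D.degree < ↑(n + 1))
    (horth : ∀ l < n, matPair p m D (P2 l) = 0) : D = C (D.coeff n) * P1 n := by
  refine sub_eq_zero.1 (eq_zero_of_forall_matPair_eq_zero hP1 hbi hH
    (degree_sub_C_mul_lt (hP1 n) hD) fun l hl => ?_)
  rw [matPair_sub_left, matPair_C_mul_left, horth l hl, hbi, if_neg hl.ne', Matrix.mul_zero,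
    sub_zero]

theorem matPair_eq_of_isMonicOfDegree (hP2 : ∀ k, (P2 k).IsMonicOfDegree k)
    (hbi : ∀ k l, matPair p m (P1 k) (P2 l) = if k = l then H k else 0)
    {n : ℕ} {Q : Mat[X]} (hQ : Q.IsMonicOfDegree n) : matPair p m (P1 n) Q = H n := by
  have h := matPair_eq_zero_of_degree_lt hP2 hbi (hQ.degree_sub_lt (hP2 n))
  rwa [matPair_sub_right, sub_eq_zero, hbi, if_pos rfl] at h

theorem eq_sub_C_mul_of_eval_eq_zero (hP1 : ∀ k, (P1 k).IsMonicOfDegree k)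
    (hbi : ∀ k l, matPair p m (P1 k) (P2 l) = if k = l then H k else 0)
    (hH : ∀ k, IsUnit (H k).det) {A : Mat} {n : ℕ} (hPA : IsUnit ((P1 n).eval A))
    {R : Mat[X]} (hR : R.IsMonicOfDegree (n + 1))
    (horth : ∀ l < n, matPair p m R (P2 l) = 0) (hRA : R.eval A = 0) :
    R = P1 (n + 1) - C ((P1 (n + 1)).eval A * ((P1 n).eval A)⁻¹) * P1 n := by
  set S := P1 (n + 1) - C ((P1 (n + 1)).eval A * ((P1 n).eval A)⁻¹) * P1 n
  have hS : S.IsMonicOfDegree (n + 1) :=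
    (hP1 (n + 1)).sub ((natDegree_C_mul_le _ _).trans_lt (by rw [(hP1 n).natDegree_eq]; omega))
  have hRS := eq_C_mul_of_forall_matPair_eq_zero hP1 hbi hH (hR.degree_sub_lt hS) fun l hl => by
    rw [matPair_sub_left, horth l hl, matPair_sub_left, matPair_C_mul_left, hbi, hbi,
      if_neg (by omega), if_neg hl.ne', Matrix.mul_zero, sub_zero, sub_zero]
  have hlead : (R - S).coeff n = 0 := by
    have hA := congrArg (eval A) hRS
    rw [eval_sub, hRA, eval_sub_C_mul_inv_mul_eq_zero _ _ _ hPA, sub_zero, eval_C_mul] at hA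
    exact hPA.mul_left_eq_zero.1 hA.symm
  rwa [hlead, C_0, zero_mul, sub_eq_zero] at hRS

end BiOrthogonal

end MatrixPairing

theorem degree_one_christoffel_general
    (p : ℕ) (m : ℕ → Matrix (Fin p) (Fin p) ℝ) (A : Matrix (Fin p) (Fin p) ℝ)
    (P1 P2 Ph1 Ph2 : ℕ → Polynomial (Matrix (Fin p) (Fin p) ℝ))
    (H Hh : ℕ → Matrix (Fin p) (Fin p) ℝ)
    (hmon1 : ∀ k, (P1 k).Monic) (hdeg1 : ∀ k, (P1 k).natDegree = k)
    (hmon2 : ∀ k, (P2 k).Monic) (hdeg2 : ∀ k, (P2 k).natDegree = k)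
    (hmonh1 : ∀ k, (Ph1 k).Monic) (hdegh1 : ∀ k, (Ph1 k).natDegree = k)
    (hmonh2 : ∀ k, (Ph2 k).Monic) (hdegh2 : ∀ k, (Ph2 k).natDegree = k)
    (hbi : ∀ k l, matPair p m (P1 k) (P2 l) = if k = l then H k else 0)
    (hbih : ∀ k l, matPair p (fun r => m (r + 1) - A * m r) (Ph1 k) (Ph2 l)
      = if k = l then Hh k else 0)
    (hH : ∀ k, IsUnit (H k).det)
    (hPA : ∀ n, IsUnit (rightEval p (P1 n) A)) :
    ∀ n : ℕ,
      Ph1 n * (Polynomial.X - Polynomial.C A)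
        = P1 (n + 1) -
            Polynomial.C (rightEval p (P1 (n + 1)) A * (rightEval p (P1 n) A)⁻¹) * P1 n
      ∧ Hh n = -(rightEval p (P1 (n + 1)) A * (rightEval p (P1 n) A)⁻¹) * H n := by
  intro n
  have hP1 k : (P1 k).IsMonicOfDegree k := ⟨hdeg1 k, hmon1 k⟩
  have hP2 k : (P2 k).IsMonicOfDegree k := ⟨hdeg2 k, hmon2 k⟩
  have hPh1 k : (Ph1 k).IsMonicOfDegree k := ⟨hdegh1 k, hmonh1 k⟩
  have hPh2 k : (Ph2 k).IsMonicOfDegree k := ⟨hdegh2 k, hmonh2 k⟩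
  -- `natDegree (P1 1) = 1` rules out the zero ring `p = 0`
  have : Nontrivial (Matrix (Fin p) (Fin p) ℝ) :=
    Nontrivial.of_polynomial_ne (p := P1 1) (q := 0) fun h => by simpa [h] using hdeg1 1
  simp only [rightEval_eq_eval] at hPA ⊢
  have hR :
      Ph1 n * (X - C A) = P1 (n + 1) - C ((P1 (n + 1)).eval A * ((P1 n).eval A)⁻¹) * P1 n :=
    eq_sub_C_mul_of_eval_eq_zero hP1 hbi hH (hPA n) ((hPh1 n).mul (isMonicOfDegree_X_sub_one A))
      (fun l hl => by
        rw [matPair_mul_X_sub_C, matPair_eq_zero_of_degree_lt hPh2 hbih ((hP2 l).degree_lt hl)])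
      (eval_mul_X_sub_C A)
  refine ⟨hR, ?_⟩
  calc Hh n = matPair p m (Ph1 n * (X - C A)) (Ph2 n) := by
        rw [matPair_mul_X_sub_C, hbih, if_pos rfl]
    _ = _ := by
      rw [hR, matPair_sub_left, matPair_C_mul_left,
        matPair_eq_zero_of_degree_lt hP2 hbi ((hPh2 n).degree_lt n.lt_succ_self),
        matPair_eq_of_isMonicOfDegree hP2 hbi (hPh2 n), zero_sub, neg_mul]

/-- Degree-one Christoffel formula: for the perturbation `W(x) = I_p x − A` of the moment
sequence `m` (whose moments become `m̂_k = m_{k+1} − A m_k`), assuming all right evaluations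
`P_n⁽¹⁾(A)` are nonsingular, the perturbed monic bi-orthogonal polynomials satisfy
`P̂_n⁽¹⁾(x)(I_p x − A) = P_{n+1}⁽¹⁾(x) − P_{n+1}⁽¹⁾(A)[P_n⁽¹⁾(A)]⁻¹ P_n⁽¹⁾(x)` and the
perturbed norms are `Ĥ_n = −P_{n+1}⁽¹⁾(A)[P_n⁽¹⁾(A)]⁻¹ H_n`. -/
theorem degree_one_christoffel
    (p : ℕ) (m : ℕ → Matrix (Fin p) (Fin p) ℝ) (A : Matrix (Fin p) (Fin p) ℝ)
    (P1 P2 Ph1 Ph2 : ℕ → Polynomial (Matrix (Fin p) (Fin p) ℝ))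
    (H Hh : ℕ → Matrix (Fin p) (Fin p) ℝ)
    (hmon1 : ∀ k, (P1 k).Monic) (hdeg1 : ∀ k, (P1 k).natDegree = k)
    (hmon2 : ∀ k, (P2 k).Monic) (hdeg2 : ∀ k, (P2 k).natDegree = k)
    (hmonh1 : ∀ k, (Ph1 k).Monic) (hdegh1 : ∀ k, (Ph1 k).natDegree = k)
    (hmonh2 : ∀ k, (Ph2 k).Monic) (hdegh2 : ∀ k, (Ph2 k).natDegree = k)
    (hbi : ∀ k l, matPair p m (P1 k) (P2 l) = if k = l then H k else 0)
    (hbih : ∀ k l, matPair p (fun r => m (r + 1) - A * m r) (Ph1 k) (Ph2 l)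
      = if k = l then Hh k else 0)
    (hH : ∀ k, IsUnit (H k).det) (hHh : ∀ k, IsUnit (Hh k).det)
    (hPA : ∀ n, IsUnit (rightEval p (P1 n) A)) :
    ∀ n : ℕ,
      Ph1 n * (Polynomial.X - Polynomial.C A)
        = P1 (n + 1) -
            Polynomial.C (rightEval p (P1 (n + 1)) A * (rightEval p (P1 n) A)⁻¹) * P1 n
      ∧ Hh n = -(rightEval p (P1 (n + 1)) A * (rightEval p (P1 n) A)⁻¹) * H n :=
  degree_one_christoffel_general p m A P1 P2 Ph1 Ph2 H Hh hmon1 hdeg1 hmon2 hdeg2 hmonh1 hdegh1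
    hmonh2 hdegh2 hbi hbih hH hPA
end

section
/- The Chebyshev combinations satisfy the first-order differential relation ((x ∓ 1) d/dx + 1/2)(U_n(x) ± U_{n-1}(x)) = (n + 1/2)(U_n(x) ∓ U_{n-1}(x)) for all n ≥ 0 (with U_{-1} = 0), and consequently the second-order equation ((x²−1) d²/dx² + (2x ∓ 1) d/dx + 1/4)(U_n(x) ∓ U_{n-1}(x)) = (n + 1/2)²(U_n(x) ∓ U_{n-1}(x)). -/
open Polynomial Polynomial.Chebyshev

/-!
Writing `S = Uₙ + Uₙ₋₁` and `D = Uₙ - Uₙ₋₁`, one has `(X - 1) S = Tₙ₊₁ - Tₙ` and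
`(X + 1) D = Tₙ₊₁ + Tₙ`. Differentiating with `T'ₘ = m Uₘ₋₁` gives the two first-order
relations, which say that `(X ∓ 1) d/dX + 1/2` maps `S` and `D` to `(n + 1/2) D` and `(n + 1/2) S`.
Composing the two operators gives the second-order equations.
-/

namespace Polynomial.Chebyshev

section CommRing

variable (R : Type*) [CommRing R]

theorem X_sub_one_mul_U_add_U_sub_one (n : ℤ) :
    (X - 1) * (U R n + U R (n - 1)) = T R (n + 1) - T R n := by
  have hT := T_eq_U_sub_X_mul_U R (n + 1)
  rw [add_sub_cancel_right] at hT
  linear_combination T_eq_U_sub_X_mul_U R n - hT - U_add_one R n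

theorem X_add_one_mul_U_sub_U_sub_one (n : ℤ) :
    (X + 1) * (U R n - U R (n - 1)) = T R (n + 1) + T R n := by
  have hT := T_eq_U_sub_X_mul_U R (n + 1)
  rw [add_sub_cancel_right] at hT
  linear_combination -T_eq_U_sub_X_mul_U R n - hT - U_add_one R n

theorem X_sub_one_mul_derivative_U_add_U_sub_one (n : ℤ) :
    (X - 1) * derivative (U R n + U R (n - 1)) + (U R n + U R (n - 1)) =
      ((n : R[X]) + 1) * U R n - (n : R[X]) * U R (n - 1) := by
  have h := congrArg derivative (X_sub_one_mul_U_add_U_sub_one R n)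
  rw [derivative_mul, derivative_sub, derivative_sub, T_derivative_eq_U, T_derivative_eq_U,
    derivative_X, derivative_one, add_sub_cancel_right] at h
  push_cast at h
  linear_combination h

theorem X_add_one_mul_derivative_U_sub_U_sub_one (n : ℤ) :
    (X + 1) * derivative (U R n - U R (n - 1)) + (U R n - U R (n - 1)) =
      ((n : R[X]) + 1) * U R n + (n : R[X]) * U R (n - 1) := by
  have h := congrArg derivative (X_add_one_mul_U_sub_U_sub_one R n)
  rw [derivative_mul, derivative_add, derivative_add, T_derivative_eq_U, T_derivative_eq_U,
    derivative_X, derivative_one, add_sub_cancel_right] at h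
  push_cast at h
  linear_combination h

end CommRing

section Field

variable (R : Type*) [Field R] [NeZero (2 : R)]

theorem C_half_add_C_half : Polynomial.C (1 / 2 : R) + Polynomial.C (1 / 2) = 1 := by
  rw [← Polynomial.C_add, add_halves, Polynomial.C_1]

theorem X_sub_one_mul_derivative_U_add_U_sub_one_add_half (n : ℤ) :
    (X - 1) * derivative (U R n + U R (n - 1)) + Polynomial.C (1 / 2 : R) * (U R n + U R (n - 1)) =
      Polynomial.C ((n : R) + 1 / 2) * (U R n - U R (n - 1)) := by
  rw [Polynomial.C_add, Polynomial.C_eq_intCast]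
  linear_combination
    X_sub_one_mul_derivative_U_add_U_sub_one R n + U R (n - 1) * C_half_add_C_half R

theorem X_add_one_mul_derivative_U_sub_U_sub_one_add_half (n : ℤ) :
    (X + 1) * derivative (U R n - U R (n - 1)) + Polynomial.C (1 / 2 : R) * (U R n - U R (n - 1)) =
      Polynomial.C ((n : R) + 1 / 2) * (U R n + U R (n - 1)) := by
  rw [Polynomial.C_add, Polynomial.C_eq_intCast]
  linear_combination
    X_add_one_mul_derivative_U_sub_U_sub_one R n - U R (n - 1) * C_half_add_C_half R

variable {R} in
theorem X_sq_sub_one_mul_derivative_derivative_of_first_order_pair {P Q : R[X]} {ε ν : R}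
    (hε : ε ^ 2 = 1)
    (hP : (X - Polynomial.C ε) * derivative P + Polynomial.C (1 / 2) * P = Polynomial.C ν * Q)
    (hQ : (X + Polynomial.C ε) * derivative Q + Polynomial.C (1 / 2) * Q = Polynomial.C ν * P) :
    (X ^ 2 - 1) * derivative (derivative Q) + (2 * X - Polynomial.C ε) * derivative Q +
        Polynomial.C (1 / 4) * Q = Polynomial.C (ν ^ 2) * Q := by
  have hQ' := congrArg derivative hQ
  simp only [derivative_mul, derivative_add, derivative_X, derivative_C, zero_mul, zero_add,
    add_zero, one_mul] at hQ'
  have hε' : Polynomial.C ε * Polynomial.C ε = 1 := by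
    rw [← Polynomial.C_mul, ← sq, hε, Polynomial.C_1]
  have h4 : Polynomial.C (1 / 4 : R) = Polynomial.C (1 / 2) * Polynomial.C (1 / 2) := by
    rw [← Polynomial.C_mul, div_mul_div_comm]; norm_num
  rw [h4, Polynomial.C_pow]
  -- multiply the derivative of `hQ` by `X - ε` and eliminate `P'` and `P` with `hP` and `hQ`
  linear_combination (X - Polynomial.C ε) * hQ' + Polynomial.C ν * hP +
    Polynomial.C (1 / 2) * hQ + derivative (derivative Q) * hε' -
    X * derivative Q * C_half_add_C_half R

end Field

end Polynomial.Chebyshev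

/-- First-order differential relations
`((x ∓ 1) d/dx + 1/2)(U_n ± U_{n-1}) = (n + 1/2)(U_n ∓ U_{n-1})` and the consequent
second-order equations
`((x²−1) d²/dx² + (2x ∓ 1) d/dx + 1/4)(U_n ∓ U_{n-1}) = (n + 1/2)²(U_n ∓ U_{n-1})`
for the Chebyshev polynomials of the second kind (with `U_{-1} = 0`). -/
theorem chebyshev_differential_relations :
    (∀ n : ℕ,
      (Polynomial.X - 1) * Polynomial.derivative (U ℝ (n:ℤ) + U ℝ ((n:ℤ) - 1)) +
          Polynomial.C (1/2 : ℝ) * (U ℝ (n:ℤ) + U ℝ ((n:ℤ) - 1))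
        = Polynomial.C ((n : ℝ) + 1/2) * (U ℝ (n:ℤ) - U ℝ ((n:ℤ) - 1))) ∧
    (∀ n : ℕ,
      (Polynomial.X + 1) * Polynomial.derivative (U ℝ (n:ℤ) - U ℝ ((n:ℤ) - 1)) +
          Polynomial.C (1/2 : ℝ) * (U ℝ (n:ℤ) - U ℝ ((n:ℤ) - 1))
        = Polynomial.C ((n : ℝ) + 1/2) * (U ℝ (n:ℤ) + U ℝ ((n:ℤ) - 1))) ∧
    (∀ n : ℕ,
      (Polynomial.X ^ 2 - 1) *
            Polynomial.derivative (Polynomial.derivative (U ℝ (n:ℤ) - U ℝ ((n:ℤ) - 1))) +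
          (2 * Polynomial.X - 1) * Polynomial.derivative (U ℝ (n:ℤ) - U ℝ ((n:ℤ) - 1)) +
          Polynomial.C (1/4 : ℝ) * (U ℝ (n:ℤ) - U ℝ ((n:ℤ) - 1))
        = Polynomial.C (((n : ℝ) + 1/2) ^ 2) * (U ℝ (n:ℤ) - U ℝ ((n:ℤ) - 1))) ∧
    (∀ n : ℕ,
      (Polynomial.X ^ 2 - 1) *
            Polynomial.derivative (Polynomial.derivative (U ℝ (n:ℤ) + U ℝ ((n:ℤ) - 1))) +
          (2 * Polynomial.X + 1) * Polynomial.derivative (U ℝ (n:ℤ) + U ℝ ((n:ℤ) - 1)) +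
          Polynomial.C (1/4 : ℝ) * (U ℝ (n:ℤ) + U ℝ ((n:ℤ) - 1))
        = Polynomial.C (((n : ℝ) + 1/2) ^ 2) * (U ℝ (n:ℤ) + U ℝ ((n:ℤ) - 1))) := by
  have hS (n : ℕ) := X_sub_one_mul_derivative_U_add_U_sub_one_add_half ℝ n
  have hD (n : ℕ) := X_add_one_mul_derivative_U_sub_U_sub_one_add_half ℝ n
  push_cast at hS hD
  refine ⟨hS, hD, fun n => ?_, fun n => ?_⟩
  · simpa only [Polynomial.C_1] using
      X_sq_sub_one_mul_derivative_derivative_of_first_order_pair (one_pow 2)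
        (by simpa only [Polynomial.C_1] using hS n) (by simpa only [Polynomial.C_1] using hD n)
  · have h := X_sq_sub_one_mul_derivative_derivative_of_first_order_pair
        (ε := -1) (ν := (n : ℝ) + 1 / 2) neg_one_sq
        (by rw [Polynomial.C_neg, Polynomial.C_1, sub_neg_eq_add]; exact hD n)
        (by rw [Polynomial.C_neg, Polynomial.C_1, ← sub_eq_add_neg]; exact hS n)
    rwa [Polynomial.C_neg, Polynomial.C_1, sub_neg_eq_add] at h
end
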